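/- arXiv:2004.11862 — 3 statements merged into one kernel-verified Lean document; each statement's English description precedes it below -/
import Mathlib

section
/- Let α > 0, let Y = (y_1, …, y_n) be a sequence of positive integers, and let σ = (σ_1, …, σ_{2n+1}) be a polygonal curve in ℝ² whose i-th vertex has x-coordinate i·α. Suppose σ_1 = (α, 0), and that for each 1 ≤ i ≤ n the curve passes through the point ((2i + 1/2)α, 0) (i.e., the segment σ_{2i}σ_{2i+1} contains it), and through either ((2i − 1/2)α, 0) or ((2i − 1/2)α, −y_i) (on segment σ_{2i−1}σ_{2i}). Let I be the set of indices i for which σ passes through ((2i − 1/2)α, −y_i). Then σ_{2n+1} = ((2n+1)α, 2·∑_{i∈I} y_i). -/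
lemma mid_aux (α : ℝ) (hα : 0 < α) (a b p : ℝ × ℝ) (c : ℝ)
    (ha : a.1 = c) (hb : b.1 = c + α) (hpx : p.1 = c + α / 2)
    (hp : p ∈ segment ℝ a b) : p.2 = (a.2 + b.2) / 2 := by
  obtain ⟨s, t, hs, ht, hst, heq⟩ := hp
  have h1 : s * a.1 + t * b.1 = p.1 := by
    have := congrArg Prod.fst heq
    simpa using this
  have h2 : s * a.2 + t * b.2 = p.2 := by
    have := congrArg Prod.snd heq
    simpa using this
  rw [ha, hb] at h1
  rw [hpx] at h1
  have ht2 : t = 1 / 2 := by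
    have hs' : s = 1 - t := by linarith
    rw [hs'] at h1
    have h3 : t * α = (1 / 2) * α := by ring_nf at h1 ⊢; linarith
    exact mul_right_cancel₀ (ne_of_gt hα) h3
  have hs2 : s = 1 / 2 := by linarith
  rw [ht2, hs2] at h2
  linarith

/-- An α-regular Y-respecting curve starting at (α,0) ends at ((2n+1)α, 2∑_{i∈I} y_i). -/
theorem stmt_0 (n : ℕ) (α : ℝ) (hα : 0 < α) (y : ℕ → ℕ)
    (hy : ∀ i, 1 ≤ i → i ≤ n → 0 < y i)
    (σ : ℕ → ℝ × ℝ)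
    (hreg : ∀ i, 1 ≤ i → i ≤ 2 * n + 1 → (σ i).1 = (i : ℝ) * α)
    (h1 : σ 1 = (α, 0))
    (hq : ∀ i, 1 ≤ i → i ≤ n →
      ((2 * (i : ℝ) + 1 / 2) * α, (0 : ℝ)) ∈ segment ℝ (σ (2 * i)) (σ (2 * i + 1)))
    (I : Finset ℕ) (hIsub : I ⊆ Finset.Icc 1 n)
    (hp : ∀ i, 1 ≤ i → i ≤ n →
      (i ∈ I →
        ((2 * (i : ℝ) - 1 / 2) * α, -(y i : ℝ)) ∈ segment ℝ (σ (2 * i - 1)) (σ (2 * i))) ∧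
      (i ∉ I →
        ((2 * (i : ℝ) - 1 / 2) * α, (0 : ℝ)) ∈ segment ℝ (σ (2 * i - 1)) (σ (2 * i)))) :
    σ (2 * n + 1) = (((2 * n + 1 : ℕ) : ℝ) * α, 2 * ∑ i ∈ I, (y i : ℝ)) := by
  have key : ∀ m, m ≤ n → (σ (2 * m + 1)).2 = 2 * ∑ i ∈ I.filter (fun i => i ≤ m), (y i : ℝ) := by
    intro m
    induction m with
    | zero =>
      intro _
      have hf : I.filter (fun i => i ≤ 0) = ∅ := by
        ext j
        simp only [Finset.mem_filter, Finset.notMem_empty, iff_false, not_and]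
        intro hj
        have := hIsub hj
        simp only [Finset.mem_Icc] at this
        omega
      rw [hf]; simp [h1]
    | succ m ih =>
      intro hm
      have ihm := ih (by omega)
      set i := m + 1 with hi
      have hi1 : 1 ≤ i := by omega
      have hin : i ≤ n := hm
      -- x-coordinates
      have hx1 : (σ (2 * m + 1)).1 = (2 * (i : ℝ) - 1) * α := by
        rw [hreg (2 * m + 1) (by omega) (by omega)]
        push_cast [hi]; ring_nf
      have hx2 : (σ (2 * i)).1 = (2 * (i : ℝ) - 1) * α + α := by
        rw [hreg (2 * i) (by omega) (by omega)]
        push_cast; ring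
      have hx3 : (σ (2 * i + 1)).1 = (2 * (i : ℝ)) * α + α := by
        rw [hreg (2 * i + 1) (by omega) (by omega)]
        push_cast; ring
      have hidx : 2 * i - 1 = 2 * m + 1 := by omega
      -- second point relation from hq
      have hq' := hq i hi1 hin
      have hmid2 : (0 : ℝ) = ((σ (2 * i)).2 + (σ (2 * i + 1)).2) / 2 := by
        have := mid_aux α hα (σ (2 * i)) (σ (2 * i + 1))
          ((2 * (i : ℝ) + 1 / 2) * α, (0 : ℝ)) ((2 * (i : ℝ)) * α)
          (by rw [hreg (2 * i) (by omega) (by omega)]; push_cast; ring)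
          (by rw [hx3]) (by simp; ring) hq'
        simpa using this
      by_cases hI : i ∈ I
      · have hseg := (hp i hi1 hin).1 hI
        rw [hidx] at hseg
        have hmid1 := mid_aux α hα (σ (2 * m + 1)) (σ (2 * i))
          ((2 * (i : ℝ) - 1 / 2) * α, -(y i : ℝ)) ((2 * (i : ℝ) - 1) * α)
          hx1 hx2 (by simp; ring) hseg
        simp only at hmid1
        have hsum : I.filter (fun j => j ≤ m + 1) = insert i (I.filter (fun j => j ≤ m)) := by
          ext j
          simp only [Finset.mem_filter, Finset.mem_insert]
          constructor
          · rintro ⟨hj, hjm⟩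
            rcases Nat.lt_or_ge j (m + 1) with h | h
            · exact Or.inr ⟨hj, by omega⟩
            · exact Or.inl (by omega)
          · rintro (rfl | ⟨hj, hjm⟩)
            · exact ⟨hI, le_refl _⟩
            · exact ⟨hj, by omega⟩
        rw [hsum, Finset.sum_insert (by simp [hi])]
        have hY2i : (σ (2 * i)).2 = -2 * (y i : ℝ) - (σ (2 * m + 1)).2 := by linarith
        have : (σ (2 * i + 1)).2 = 2 * (y i : ℝ) + (σ (2 * m + 1)).2 := by linarith
        rw [show 2 * (m + 1) + 1 = 2 * i + 1 from rfl, this, ihm]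
        ring
      · have hseg := (hp i hi1 hin).2 hI
        rw [hidx] at hseg
        have hmid1 := mid_aux α hα (σ (2 * m + 1)) (σ (2 * i))
          ((2 * (i : ℝ) - 1 / 2) * α, (0 : ℝ)) ((2 * (i : ℝ) - 1) * α)
          hx1 hx2 (by simp; ring) hseg
        simp only at hmid1
        have hsum : I.filter (fun j => j ≤ m + 1) = I.filter (fun j => j ≤ m) := by
          ext j
          simp only [Finset.mem_filter]
          constructor
          · rintro ⟨hj, hjm⟩
            refine ⟨hj, ?_⟩
            rcases Nat.lt_or_ge j (m + 1) with h | h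
            · omega
            · exfalso; have : j = i := by omega
              exact hI (this ▸ hj)
          · rintro ⟨hj, hjm⟩; exact ⟨hj, by omega⟩
        rw [hsum]
        have : (σ (2 * i + 1)).2 = (σ (2 * m + 1)).2 := by linarith
        rw [show 2 * (m + 1) + 1 = 2 * i + 1 from rfl, this, ihm]
  have hfin : I.filter (fun i => i ≤ n) = I := by
    ext j
    simp only [Finset.mem_filter, and_iff_left_iff_imp]
    intro hj
    have := hIsub hj
    simp only [Finset.mem_Icc] at this
    exact this.2
  have hy2 := key n le_rfl
  rw [hfin] at hy2
  have hx := hreg (2 * n + 1) (by omega) le_rfl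
  ext
  · rw [hx]
  · exact hy2
end

section
/- Under the hypotheses of the α-regular Y-respecting curve lemma (σ_1 = (α,0), curve passes through the prescribed reflection points), every vertex σ_j of σ has y-coordinate in the interval [−2M, 2M], where M = ∑_{i=1}^n y_i. -/
/-- If a point lies on a segment whose endpoints have x-coordinates `c` and `c+α`,
and the point's x-coordinate is `c + α/2`, then its y-coordinate is the midpoint. -/
lemma mid_of_seg {P Q z : ℝ × ℝ} {c α : ℝ} (hα : 0 < α)
    (hP : P.1 = c) (hQ : Q.1 = c + α) (hz : z.1 = c + α / 2)
    (h : z ∈ segment ℝ P Q) : z.2 = (P.2 + Q.2) / 2 := by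
  obtain ⟨u, v, hu, hv, huv, hs⟩ := h
  have h1 : u * P.1 + v * Q.1 = z.1 := by
    have := congrArg Prod.fst hs
    simpa using this
  have h2 : u * P.2 + v * Q.2 = z.2 := by
    have := congrArg Prod.snd hs
    simpa using this
  rw [hP, hQ, hz] at h1
  have hv2 : v = 1 / 2 := by
    have hu' : u = 1 - v := by linarith
    rw [hu'] at h1
    have hva : v * α = α / 2 := by ring_nf at h1 ⊢; linarith
    have hne : α ≠ 0 := ne_of_gt hα
    have := mul_right_cancel₀ hne (by linarith : v * α = (1/2) * α)
    linarith
  have hu2 : u = 1 / 2 := by linarith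
  rw [hu2, hv2] at h2
  linarith

/-- Every vertex of an α-regular Y-respecting curve has y-coordinate in [-2M, 2M],
where M = ∑ y_i. -/
theorem stmt_1 (n : ℕ) (α : ℝ) (hα : 0 < α) (y : ℕ → ℕ)
    (hy : ∀ i, 1 ≤ i → i ≤ n → 0 < y i)
    (σ : ℕ → ℝ × ℝ)
    (hreg : ∀ i, 1 ≤ i → i ≤ 2 * n + 1 → (σ i).1 = (i : ℝ) * α)
    (h1 : σ 1 = (α, 0))
    (hq : ∀ i, 1 ≤ i → i ≤ n →
      ((2 * (i : ℝ) + 1 / 2) * α, (0 : ℝ)) ∈ segment ℝ (σ (2 * i)) (σ (2 * i + 1)))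
    (hp : ∀ i, 1 ≤ i → i ≤ n →
      ((2 * (i : ℝ) - 1 / 2) * α, (0 : ℝ)) ∈ segment ℝ (σ (2 * i - 1)) (σ (2 * i)) ∨
      ((2 * (i : ℝ) - 1 / 2) * α, -(y i : ℝ)) ∈ segment ℝ (σ (2 * i - 1)) (σ (2 * i))) :
    ∀ j, 1 ≤ j → j ≤ 2 * n + 1 →
      -(2 * ∑ i ∈ Finset.Icc 1 n, (y i : ℝ)) ≤ (σ j).2 ∧
      (σ j).2 ≤ 2 * ∑ i ∈ Finset.Icc 1 n, (y i : ℝ) := by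
  set a : ℕ → ℝ := fun j => (σ j).2 with ha
  -- from hq: a(2i) + a(2i+1) = 0
  have fq : ∀ i, 1 ≤ i → i ≤ n → a (2 * i) + a (2 * i + 1) = 0 := by
    intro i hi1 hi2
    have hmid := mid_of_seg (P := σ (2*i)) (Q := σ (2*i+1))
      (z := ((2 * (i : ℝ) + 1 / 2) * α, (0 : ℝ))) (c := 2 * (i:ℝ) * α) hα
      (by rw [hreg (2*i) (by omega) (by omega)]; push_cast; ring)
      (by rw [hreg (2*i+1) (by omega) (by omega)]; push_cast; ring)
      (by ring) (hq i hi1 hi2)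
    simp only [ha] at *
    linarith [hmid]
  -- from hp: a(2i-1) + a(2i) = 0 or = -2 * y i
  have fp : ∀ i, 1 ≤ i → i ≤ n →
      a (2*i - 1) + a (2*i) = 0 ∨ a (2*i - 1) + a (2*i) = -2 * (y i : ℝ) := by
    intro i hi1 hi2
    have hc1 : (σ (2*i - 1)).1 = (2 * (i:ℝ) - 1) * α := by
      rw [hreg (2*i-1) (by omega) (by omega)]
      have : ((2*i - 1 : ℕ) : ℝ) = 2 * (i:ℝ) - 1 := by
        have h2 : (1:ℕ) ≤ 2*i := by omega
        push_cast [Nat.cast_sub h2]; ring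
      rw [this]
    have hc2 : (σ (2*i)).1 = (2 * (i:ℝ) - 1) * α + α := by
      rw [hreg (2*i) (by omega) (by omega)]; push_cast; ring
    rcases hp i hi1 hi2 with h | h
    · left
      have hmid := mid_of_seg hα hc1 hc2 (by ring) h
      simp only [ha]; linarith [hmid]
    · right
      have hmid := mid_of_seg hα hc1 hc2 (by ring) h
      simp only [ha]; linarith [hmid]
  have ha1 : a 1 = 0 := by simp [ha, h1]
  -- odd vertices
  have hodd : ∀ k, k ≤ n → 0 ≤ a (2*k + 1) ∧
      a (2*k + 1) ≤ 2 * ∑ i ∈ Finset.Icc 1 k, (y i : ℝ) := by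
    intro k
    induction k with
    | zero => intro _; simp [ha1]
    | succ m ih =>
      intro hm
      obtain ⟨ih1, ih2⟩ := ih (by omega)
      have hq' := fq (m+1) (by omega) (by omega)
      have hp' := fp (m+1) (by omega) (by omega)
      have e1 : 2 * (m+1) - 1 = 2 * m + 1 := by omega
      rw [e1] at hp'
      have hsum : ∑ i ∈ Finset.Icc 1 (m+1), (y i : ℝ)
          = (∑ i ∈ Finset.Icc 1 m, (y i : ℝ)) + (y (m+1) : ℝ) := by
        rw [Finset.sum_Icc_succ_top (by omega : 1 ≤ m + 1)]
      have hy' : (0:ℝ) ≤ (y (m+1) : ℝ) := by positivity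
      constructor
      · rcases hp' with h | h <;> linarith
      · rw [hsum]
        rcases hp' with h | h <;> linarith
  intro j hj1 hj2
  have hMnn : (0:ℝ) ≤ ∑ i ∈ Finset.Icc 1 n, (y i : ℝ) :=
    Finset.sum_nonneg (fun i _ => by positivity)
  have hpart : ∀ k, k ≤ n → ∑ i ∈ Finset.Icc 1 k, (y i : ℝ)
      ≤ ∑ i ∈ Finset.Icc 1 n, (y i : ℝ) := by
    intro k hk
    apply Finset.sum_le_sum_of_subset_of_nonneg
    · exact Finset.Icc_subset_Icc_right hk
    · intro i _ _; positivity
  rcases Nat.even_or_odd j with he | ho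
  · -- j even: j = 2k, 1 ≤ k ≤ n
    obtain ⟨k, hk⟩ := he
    have hk' : j = 2 * k := by omega
    have hk1 : 1 ≤ k := by omega
    have hkn : k ≤ n := by omega
    have hq' := fq k hk1 hkn
    obtain ⟨hb1, hb2⟩ := hodd k hkn
    have := hpart k hkn
    rw [hk']
    constructor <;> simp only [ha] at * <;> linarith
  · -- j odd: j = 2k+1, k ≤ n
    obtain ⟨k, hk⟩ := ho
    have hkn : k ≤ n := by omega
    obtain ⟨hb1, hb2⟩ := hodd k hkn
    have := hpart k hkn
    rw [hk]
    constructor <;> simp only [ha] at * <;> linarith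
end

section
/- Let δ > 0, let p = (x, y) ∈ ℝ², and let ℓ be a line segment in ℝ². If there exist points a, b, c appearing in this order along ℓ (i.e., b ∈ [a, c], a, c ∈ ℓ) such that ‖a − (x, y+δ)‖ ≤ δ, ‖b − (x, y−δ)‖ ≤ δ, and ‖c − (x, y+δ)‖ ≤ δ, then p ∈ ℓ. In particular, the only point of ℝ² within distance δ of both (x, y+δ) and (x, y−δ) is p itself. -/
/-!
The closed δ-ball around `(x, y + δ)` is convex, so `b`, lying between `a` and `c`, is within δ
of both `(x, y + δ)` and `(x, y - δ)`. These two centres are `2δ` apart, so by strict convexity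
of the Euclidean norm the only such point is their midpoint `(x, y)`; thus `b = (x, y)`, and `b`
lies on the segment because segments are convex.
-/

section StrictConvex

variable {V P : Type*} [NormedAddCommGroup V] [NormedSpace ℝ V] [StrictConvexSpace ℝ V]
  [MetricSpace P] [NormedAddTorsor V P]

theorem eq_midpoint_of_dist_le_half {p₁ p₂ z : P} (h₁ : dist z p₁ ≤ dist p₁ p₂ / 2)
    (h₂ : dist z p₂ ≤ dist p₁ p₂ / 2) : z = midpoint ℝ p₁ p₂ := by
  have htri : dist p₁ p₂ ≤ dist p₁ z + dist z p₂ := dist_triangle _ _ _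
  rw [dist_comm] at h₁
  exact eq_midpoint_of_dist_eq_half (by linarith) (by linarith)

end StrictConvex

section VerticalPair

variable (x y δ : ℝ)

theorem dist_vertical_pair (hδ : 0 ≤ δ) :
    dist (!₂[x, y + δ] : EuclideanSpace ℝ (Fin 2)) !₂[x, y - δ] = 2 * δ := by
  rw [EuclideanSpace.dist_eq]
  simp [Real.dist_eq, show y + δ - (y - δ) = 2 * δ by ring,
    Real.sqrt_sq (by positivity : 0 ≤ 2 * δ)]

theorem midpoint_vertical_pair :
    midpoint ℝ (!₂[x, y + δ] : EuclideanSpace ℝ (Fin 2)) !₂[x, y - δ] = !₂[x, y] := by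
  ext i
  fin_cases i <;> simp [midpoint_eq_smul_add] <;> ring

theorem eq_of_dist_le_vertical_pair {z : EuclideanSpace ℝ (Fin 2)}
    (h₁ : dist z !₂[x, y + δ] ≤ δ) (h₂ : dist z !₂[x, y - δ] ≤ δ) : z = !₂[x, y] := by
  have hδ : 0 ≤ δ := dist_nonneg.trans h₁
  rw [← midpoint_vertical_pair]
  apply eq_midpoint_of_dist_le_half <;> rw [dist_vertical_pair x y δ hδ] <;> linarith

end VerticalPair

theorem stmt_12_general (δ x y : ℝ) (e₁ e₂ a b c : EuclideanSpace ℝ (Fin 2))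
    (ha : a ∈ segment ℝ e₁ e₂) (hc : c ∈ segment ℝ e₁ e₂) (hb : b ∈ segment ℝ a c)
    (hda : dist a (!₂[x, y + δ] : EuclideanSpace ℝ (Fin 2)) ≤ δ)
    (hdb : dist b (!₂[x, y - δ] : EuclideanSpace ℝ (Fin 2)) ≤ δ)
    (hdc : dist c (!₂[x, y + δ] : EuclideanSpace ℝ (Fin 2)) ≤ δ) :
    (!₂[x, y] : EuclideanSpace ℝ (Fin 2)) ∈ segment ℝ e₁ e₂ ∧
    ∀ z : EuclideanSpace ℝ (Fin 2),
      dist z (!₂[x, y + δ] : EuclideanSpace ℝ (Fin 2)) ≤ δ →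
      dist z (!₂[x, y - δ] : EuclideanSpace ℝ (Fin 2)) ≤ δ →
      z = (!₂[x, y] : EuclideanSpace ℝ (Fin 2)) := by
  have hb_upper : b ∈ Metric.closedBall (!₂[x, y + δ] : EuclideanSpace ℝ (Fin 2)) δ :=
    (convex_closedBall _ δ).segment_subset hda hdc hb
  have hb_eq : b = !₂[x, y] := eq_of_dist_le_vertical_pair x y δ hb_upper hdb
  refine ⟨?_, fun z => eq_of_dist_le_vertical_pair x y δ⟩
  exact hb_eq ▸ (convex_segment e₁ e₂).segment_subset ha hc hb

/-- δ-gadget property: if points a, b, c appear in this order along a line segment ℓ and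
are within δ of (x,y+δ), (x,y-δ), (x,y+δ) respectively, then (x,y) ∈ ℓ.  Moreover (x,y)
is the only point of the plane within δ of both (x,y+δ) and (x,y-δ). -/
theorem stmt_12 (δ x y : ℝ) (hδ : 0 < δ) (e₁ e₂ a b c : EuclideanSpace ℝ (Fin 2))
    (ha : a ∈ segment ℝ e₁ e₂) (hc : c ∈ segment ℝ e₁ e₂) (hb : b ∈ segment ℝ a c)
    (hda : dist a (!₂[x, y + δ] : EuclideanSpace ℝ (Fin 2)) ≤ δ)
    (hdb : dist b (!₂[x, y - δ] : EuclideanSpace ℝ (Fin 2)) ≤ δ)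
    (hdc : dist c (!₂[x, y + δ] : EuclideanSpace ℝ (Fin 2)) ≤ δ) :
    (!₂[x, y] : EuclideanSpace ℝ (Fin 2)) ∈ segment ℝ e₁ e₂ ∧
    ∀ z : EuclideanSpace ℝ (Fin 2),
      dist z (!₂[x, y + δ] : EuclideanSpace ℝ (Fin 2)) ≤ δ →
      dist z (!₂[x, y - δ] : EuclideanSpace ℝ (Fin 2)) ≤ δ →
      z = (!₂[x, y] : EuclideanSpace ℝ (Fin 2)) :=
  stmt_12_general δ x y e₁ e₂ a b c ha hc hb hda hdb hdc
end
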